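/- For integers m ≥ 1, n ≥ 1, and d ≥ n+1 (with d ≥ 2), the quantity R(m,n,(d,1)) = [binomial(m+d-1,d-1)/(binomial(m+d-1,d-1)−1)] · [(m+1)(n+1) − ((n+1)/d)(m+d)] is at least m·n. -/
import Mathlib


/-- For integers `m ≥ 1`, `n ≥ 1` and `d ≥ n+1`, the quantity
`R(m,n,(d,1)) = [C(m+d-1,d-1)/(C(m+d-1,d-1)−1)] · [(m+1)(n+1) − ((n+1)/d)(m+d)]`
is at least `m·n`. -/
theorem stmt11 (m n d : ℕ) (hm : 1 ≤ m) (hn : 1 ≤ n) (hd : n + 1 ≤ d) :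
    ((m : ℚ) * (n : ℚ)) ≤
      (((m+d-1).choose (d-1) : ℚ) / (((m+d-1).choose (d-1) : ℚ) - 1))
        * (((m : ℚ)+1)*((n : ℚ)+1) - (((n : ℚ)+1)/(d : ℚ)) * ((m : ℚ)+(d : ℚ))) := by
  have hd2 : 2 ≤ d := by omega
  -- choose bound: C ≥ d ≥ 2
  have hC2 : 2 ≤ (m+d-1).choose (d-1) := by
    have h1 : d.choose (d-1) ≤ (m+d-1).choose (d-1) :=
      Nat.choose_le_choose _ (by omega)
    have h2 : d.choose (d-1) = d := by
      rw [Nat.choose_symm (by omega : 1 ≤ d), Nat.choose_one_right]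
    omega
  set C : ℚ := ((m+d-1).choose (d-1) : ℚ) with hCdef
  have hCq : (2:ℚ) ≤ C := by rw [hCdef]; exact_mod_cast hC2
  have hC1 : (0:ℚ) < C - 1 := by linarith
  have hA : (1:ℚ) ≤ C / (C - 1) := by
    rw [le_div_iff₀ hC1]; linarith
  have hdq : (0:ℚ) < (d:ℚ) := by positivity
  have hdn : ((n:ℚ) + 1) ≤ (d:ℚ) := by exact_mod_cast hd
  have hmq : (1:ℚ) ≤ (m:ℚ) := by exact_mod_cast hm
  have hnq : (1:ℚ) ≤ (n:ℚ) := by exact_mod_cast hn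
  have key : ((m:ℚ) * n) ≤ ((m:ℚ)+1)*((n:ℚ)+1) - (((n:ℚ)+1)/(d:ℚ)) * ((m:ℚ)+(d:ℚ)) := by
    rw [le_sub_iff_add_le, div_mul_eq_mul_div, add_comm, ← le_sub_iff_add_le, div_le_iff₀ hdq]
    nlinarith [mul_nonneg (by linarith : (0:ℚ) ≤ (m:ℚ)) (by linarith : (0:ℚ) ≤ (d:ℚ) - (n+1))]
  have hFnn : (0:ℚ) ≤ ((m:ℚ)+1)*((n:ℚ)+1) - (((n:ℚ)+1)/(d:ℚ)) * ((m:ℚ)+(d:ℚ)) := by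
    nlinarith
  calc ((m:ℚ) * n) ≤ ((m:ℚ)+1)*((n:ℚ)+1) - (((n:ℚ)+1)/(d:ℚ)) * ((m:ℚ)+(d:ℚ)) := key
    _ = 1 * (((m:ℚ)+1)*((n:ℚ)+1) - (((n:ℚ)+1)/(d:ℚ)) * ((m:ℚ)+(d:ℚ))) := (one_mul _).symm
    _ ≤ C / (C - 1) * (((m:ℚ)+1)*((n:ℚ)+1) - (((n:ℚ)+1)/(d:ℚ)) * ((m:ℚ)+(d:ℚ))) :=
        mul_le_mul_of_nonneg_right hA hFnn
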